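/- Let U ⊆ ℝ² be open, n ≥ 1, f : U → ℝⁿ smooth, u : U → ℝ smooth, and φ ∈ C_c^∞(U). Then ∫_U (⟨∂²_{11} f, ∂²_{22} f⟩ − |∂²_{12} f|²) e^{−2u} φ dx = ∫_U (⟨∂_1 f, ∂²_{12} f⟩ ∂_2(e^{−2u} φ) − ⟨∂_1 f, ∂²_{22} f⟩ ∂_1(e^{−2u} φ)) dx. -/

import Mathlib

/-!
The integrand on the left is a divergence up to the weight: for a `C³` map `g`,
`⟨∂₁₁g, ∂₂₂g⟩ - |∂₁₂g|² = ∂₁⟨∂₁g, ∂₂₂g⟩ - ∂₂⟨∂₁g, ∂₁₂g⟩`, since the third-order terms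
`⟨∂₁g, ∂₁∂₂₂g⟩` and `⟨∂₁g, ∂₂∂₁₂g⟩` cancel by symmetry of second derivatives. Multiplying by the
compactly supported weight `ψ = e^{-2u} φ` and integrating by parts once in each direction gives
the identity. Since `f` is only smooth on `U`, it is first replaced by `χ • f` for a smooth cutoff
`χ` equal to `1` near `tsupport ψ` and supported in `U`.
-/

open MeasureTheory Real Filter Topology

noncomputable section

/-- First partial derivative in the `i`-th coordinate direction. -/
def pd {E : Type*} [NormedAddCommGroup E] [NormedSpace ℝ E]
    (f : EuclideanSpace ℝ (Fin 2) → E) (i : Fin 2) (x : EuclideanSpace ℝ (Fin 2)) : E :=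
  fderiv ℝ f x (EuclideanSpace.single i 1)

/-- Second partial derivative `∂_i ∂_j`. -/
def pd2 {E : Type*} [NormedAddCommGroup E] [NormedSpace ℝ E]
    (f : EuclideanSpace ℝ (Fin 2) → E) (i j : Fin 2) (x : EuclideanSpace ℝ (Fin 2)) : E :=
  pd (pd f j) i x

open scoped Manifold ContDiff

local notation "ℝ²" => EuclideanSpace ℝ (Fin 2)

theorem contDiff_smul_of_tsupport_subset {𝕜 E F : Type*} [NontriviallyNormedField 𝕜]
    [NormedAddCommGroup E] [NormedSpace 𝕜 E] [NormedAddCommGroup F] [NormedSpace 𝕜 F]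
    {n : ℕ∞ω} {U : Set E} {χ : E → 𝕜} {f : E → F}
    (hU : IsOpen U) (hχ : ContDiff 𝕜 n χ) (hf : ContDiffOn 𝕜 n f U) (hχU : tsupport χ ⊆ U) :
    ContDiff 𝕜 n fun x => χ x • f x := by
  refine contDiff_iff_contDiffAt.2 fun x => ?_
  by_cases hx : x ∈ U
  · exact hχ.contDiffAt.smul (hf.contDiffAt (hU.mem_nhds hx))
  · have hx' : x ∉ tsupport fun x => χ x • f x :=
      fun h => hx (hχU (tsupport_smul_subset_left _ _ h))
    exact contDiffAt_const.congr_of_eventuallyEq (notMem_tsupport_iff_eventuallyEq.1 hx')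

theorem ContDiffOn.exists_contDiff_eventuallyEq {E F : Type*} [NormedAddCommGroup E]
    [NormedSpace ℝ E] [FiniteDimensional ℝ E] [NormedAddCommGroup F] [NormedSpace ℝ F]
    {n : ℕ∞} {U K : Set E} {f : E → F} (hf : ContDiffOn ℝ n f U) (hU : IsOpen U)
    (hK : IsCompact K) (hKU : K ⊆ U) :
    ∃ g : E → F, ContDiff ℝ n g ∧ ∀ᶠ x in 𝓝ˢ K, g x = f x := by
  obtain ⟨L, hL, hKL, hLU⟩ := exists_compact_between hK hU hKU
  obtain ⟨χ, hχK, hχL, -⟩ :=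
    exists_contMDiffMap_one_nhds_of_subset_interior 𝓘(ℝ, E) (n := n) hK.isClosed hKL
  have hχU : tsupport χ ⊆ U :=
    (closure_minimal (Function.support_subset_iff'.2 hχL) hL.isClosed).trans hLU
  refine ⟨fun x => χ x • f x,
    contDiff_smul_of_tsupport_subset hU (contMDiff_iff_contDiff.1 χ.contMDiff) hf hχU, ?_⟩
  filter_upwards [hχK] with x hx
  rw [hx, one_smul]

section PartialDerivatives

variable {F : Type*} [NormedAddCommGroup F] [NormedSpace ℝ F]

theorem ContDiff.pd {n : ℕ∞ω} {g : ℝ² → F} (hg : ContDiff ℝ (n + 1) g) (i : Fin 2) :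
    ContDiff ℝ n (_root_.pd g i) :=
  (hg.fderiv_right le_rfl).clm_apply contDiff_const

theorem ContDiff.continuous_pd {n : ℕ∞ω} {g : ℝ² → F} (hg : ContDiff ℝ n g) (hn : n ≠ 0)
    (i : Fin 2) : Continuous (_root_.pd g i) :=
  (hg.continuous_fderiv hn).clm_apply continuous_const

theorem pd_of_notMem_tsupport {g : ℝ² → F} {x : ℝ²} (hx : x ∉ tsupport g) (i : Fin 2) :
    pd g i x = 0 := by
  rw [pd, fderiv_of_notMem_tsupport ℝ hx, zero_apply]

theorem Filter.EventuallyEq.pd {f g : ℝ² → F} {x : ℝ²} (h : f =ᶠ[𝓝 x] g) (i : Fin 2) :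
    _root_.pd f i =ᶠ[𝓝 x] _root_.pd g i :=
  (h.fderiv (𝕜 := ℝ)).mono fun y hy => by rw [_root_.pd, _root_.pd, hy]

theorem Filter.EventuallyEq.pd2_eq {f g : ℝ² → F} {x : ℝ²} (h : f =ᶠ[𝓝 x] g) (i j : Fin 2) :
    _root_.pd2 f i j x = _root_.pd2 g i j x :=
  ((h.pd j).pd i).eq_of_nhds

theorem ContDiffAt.pd2_comm {g : ℝ² → F} {x : ℝ²} (hg : ContDiffAt ℝ 2 g x) (i j : Fin 2) :
    pd2 g i j x = pd2 g j i x := by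
  have hd : DifferentiableAt ℝ (fderiv ℝ g) x :=
    (hg.fderiv_right (m := 1) le_rfl).differentiableAt one_ne_zero
  have hpd2 : ∀ k l, pd2 g k l x
      = fderiv ℝ (fderiv ℝ g) x (EuclideanSpace.single k 1) (EuclideanSpace.single l 1) := by
    intro k l
    show fderiv ℝ (fun y => fderiv ℝ g y (EuclideanSpace.single l 1)) x _ = _
    rw [fderiv_clm_apply hd (differentiableAt_const _)]
    simp
  rw [hpd2, hpd2]
  exact hg.isSymmSndFDerivAt (by simp) _ _

theorem pd_inner {E : Type*} [NormedAddCommGroup E] [InnerProductSpace ℝ E] {A B : ℝ² → E}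
    {x : ℝ²} (hA : DifferentiableAt ℝ A x) (hB : DifferentiableAt ℝ B x) (i : Fin 2) :
    pd (fun y => inner ℝ (A y) (B y)) i x
      = inner ℝ (pd A i x) (B x) + inner ℝ (A x) (pd B i x) := by
  rw [pd, fderiv_inner_apply ℝ hA hB, add_comm]
  rfl

theorem integral_mul_pd_eq_neg_pd_mul {a ψ : ℝ² → ℝ} (ha : ContDiff ℝ 1 a)
    (hψ : ContDiff ℝ 1 ψ) (hψc : HasCompactSupport ψ) (i : Fin 2) :
    ∫ x, a x * pd ψ i x = -∫ x, pd a i x * ψ x :=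
  integral_mul_fderiv_eq_neg_fderiv_mul_of_integrable
    (((ha.continuous_pd one_ne_zero i).mul hψ.continuous).integrable_of_hasCompactSupport
      hψc.mul_left)
    ((ha.continuous.mul (hψ.continuous_pd one_ne_zero i)).integrable_of_hasCompactSupport
      (hψc.fderiv_apply ℝ _).mul_left)
    ((ha.continuous.mul hψ.continuous).integrable_of_hasCompactSupport hψc.mul_left)
    (fun x _ => ha.differentiable one_ne_zero x) (fun x _ => hψ.differentiable one_ne_zero x)

end PartialDerivatives

section HessianIdentity

variable {E : Type*} [NormedAddCommGroup E] [InnerProductSpace ℝ E]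

theorem inner_pd2_sub_norm_pd2_sq_eq_pd_sub_pd {g : ℝ² → E} (hg : ContDiff ℝ 3 g) (x : ℝ²) :
    (inner ℝ (pd2 g 0 0 x) (pd2 g 1 1 x) : ℝ) - ‖pd2 g 0 1 x‖ ^ 2
      = pd (fun y => inner ℝ (pd g 0 y) (pd2 g 1 1 y)) 0 x
        - pd (fun y => inner ℝ (pd g 0 y) (pd2 g 0 1 y)) 1 x := by
  have hg0 : ContDiff ℝ 1 (pd g 0) := (hg.pd (n := 2) 0).of_le (by norm_num)
  have hg1 : ContDiff ℝ 2 (pd g 1) := hg.pd 1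
  have hd : ∀ {h : ℝ² → E}, ContDiff ℝ 1 h → DifferentiableAt ℝ h x :=
    fun hh => hh.differentiable one_ne_zero x
  have hg11 : ContDiff ℝ 1 (pd2 g 1 1) := hg1.pd 1
  have hg01 : ContDiff ℝ 1 (pd2 g 0 1) := hg1.pd 0
  rw [pd_inner (hd hg0) (hd hg11),
    pd_inner (hd hg0) (hd hg01)]
  have h12 : pd2 g 1 0 x = pd2 g 0 1 x := (hg.of_le (by norm_num)).contDiffAt.pd2_comm 1 0
  have h122 : pd2 (pd g 1) 0 1 x = pd2 (pd g 1) 1 0 x := hg1.contDiffAt.pd2_comm 0 1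
  change _ = inner ℝ (pd2 g 0 0 x) _ + inner ℝ _ (pd2 (pd g 1) 0 1 x)
    - (inner ℝ (pd2 g 1 0 x) _ + inner ℝ _ (pd2 (pd g 1) 1 0 x))
  rw [h12, h122, real_inner_self_eq_norm_sq]
  ring

theorem integral_inner_pd2_sub_norm_pd2_sq_mul {g : ℝ² → E} {ψ : ℝ² → ℝ}
    (hg : ContDiff ℝ 3 g) (hψ : ContDiff ℝ 1 ψ) (hψc : HasCompactSupport ψ) :
    ∫ x, ((inner ℝ (pd2 g 0 0 x) (pd2 g 1 1 x) : ℝ) - ‖pd2 g 0 1 x‖ ^ 2) * ψ x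
      = ∫ x, ((inner ℝ (pd g 0 x) (pd2 g 0 1 x) : ℝ) * pd ψ 1 x
          - (inner ℝ (pd g 0 x) (pd2 g 1 1 x) : ℝ) * pd ψ 0 x) := by
  set a := fun y => (inner ℝ (pd g 0 y) (pd2 g 1 1 y) : ℝ)
  set b := fun y => (inner ℝ (pd g 0 y) (pd2 g 0 1 y) : ℝ)
  have hg0 : ContDiff ℝ 1 (pd g 0) := (hg.pd (n := 2) 0).of_le (by norm_num)
  have hg1 : ContDiff ℝ 2 (pd g 1) := hg.pd 1
  have ha : ContDiff ℝ 1 a := hg0.inner ℝ (hg1.pd 1 : ContDiff ℝ 1 (pd2 g 1 1))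
  have hb : ContDiff ℝ 1 b := hg0.inner ℝ (hg1.pd 0 : ContDiff ℝ 1 (pd2 g 0 1))
  have hint : ∀ {c : ℝ² → ℝ}, Continuous c → Integrable fun x => c x * ψ x :=
    fun hc => (hc.mul hψ.continuous).integrable_of_hasCompactSupport hψc.mul_left
  have hint' : ∀ {c : ℝ² → ℝ}, Continuous c → ∀ i, Integrable fun x => c x * pd ψ i x :=
    fun hc i => (hc.mul (hψ.continuous_pd one_ne_zero i)).integrable_of_hasCompactSupport
      (hψc.fderiv_apply ℝ _).mul_left
  simp_rw [inner_pd2_sub_norm_pd2_sq_eq_pd_sub_pd hg, sub_mul]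
  rw [integral_sub (hint (ha.continuous_pd one_ne_zero 0))
      (hint (hb.continuous_pd one_ne_zero 1)),
    integral_sub (hint' hb.continuous 1) (hint' ha.continuous 0),
    integral_mul_pd_eq_neg_pd_mul ha hψ hψc, integral_mul_pd_eq_neg_pd_mul hb hψ hψc]
  ring

theorem setIntegral_inner_pd2_sub_norm_pd2_sq_mul {U : Set ℝ²} {f : ℝ² → E} {ψ : ℝ² → ℝ}
    (hU : IsOpen U) (hf : ContDiffOn ℝ 3 f U) (hψ : ContDiff ℝ 1 ψ) (hψc : HasCompactSupport ψ)
    (hψU : tsupport ψ ⊆ U) :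
    ∫ x in U, ((inner ℝ (pd2 f 0 0 x) (pd2 f 1 1 x) : ℝ) - ‖pd2 f 0 1 x‖ ^ 2) * ψ x
      = ∫ x in U, ((inner ℝ (pd f 0 x) (pd2 f 0 1 x) : ℝ) * pd ψ 1 x
          - (inner ℝ (pd f 0 x) (pd2 f 1 1 x) : ℝ) * pd ψ 0 x) := by
  obtain ⟨g, hg, hgf⟩ := ContDiffOn.exists_contDiff_eventuallyEq (n := 3) hf hU hψc hψU
  have hloc : ∀ x ∈ tsupport ψ, g =ᶠ[𝓝 x] f := fun x hx => hgf.filter_mono (nhds_le_nhdsSet hx)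
  have hψ0 : ∀ x ∉ tsupport ψ, ψ x = 0 ∧ ∀ i, pd ψ i x = 0 :=
    fun x hx => ⟨image_eq_zero_of_notMem_tsupport hx, pd_of_notMem_tsupport hx⟩
  rw [setIntegral_eq_integral_of_forall_compl_eq_zero,
    setIntegral_eq_integral_of_forall_compl_eq_zero]
  · refine (integral_congr_ae (Eventually.of_forall fun x => ?_)).trans
      ((integral_inner_pd2_sub_norm_pd2_sq_mul hg hψ hψc).trans
        (integral_congr_ae (Eventually.of_forall fun x => ?_)))
    · by_cases hx : x ∈ tsupport ψ
      · simp only [(hloc x hx).pd2_eq]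
      · simp [(hψ0 x hx).1]
    · by_cases hx : x ∈ tsupport ψ
      · simp only [(hloc x hx).pd2_eq, ((hloc x hx).pd 0).eq_of_nhds]
      · simp [(hψ0 x hx).2]
  · exact fun x hx => by simp [(hψ0 x fun h => hx (hψU h)).2]
  · exact fun x hx => by simp [(hψ0 x fun h => hx (hψU h)).1]

end HessianIdentity

theorem stmt3_general {n : ℕ} (U : Set (EuclideanSpace ℝ (Fin 2))) (hU : IsOpen U)
    (f : EuclideanSpace ℝ (Fin 2) → EuclideanSpace ℝ (Fin n))
    (u φ : EuclideanSpace ℝ (Fin 2) → ℝ)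
    (hf : ContDiffOn ℝ (⊤ : ℕ∞) f U) (hu : ContDiffOn ℝ (⊤ : ℕ∞) u U)
    (hφ : ContDiff ℝ (⊤ : ℕ∞) φ) (hφc : HasCompactSupport φ) (hφU : tsupport φ ⊆ U) :
    ∫ x in U, ((inner ℝ (pd2 f 0 0 x) (pd2 f 1 1 x) : ℝ) - ‖pd2 f 0 1 x‖ ^ 2)
        * Real.exp (-(2 * u x)) * φ x
      = ∫ x in U,
          ((inner ℝ (pd f 0 x) (pd2 f 0 1 x) : ℝ)
              * pd (fun y => Real.exp (-(2 * u y)) * φ y) 1 x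
            - (inner ℝ (pd f 0 x) (pd2 f 1 1 x) : ℝ)
              * pd (fun y => Real.exp (-(2 * u y)) * φ y) 0 x) := by
  have hweight : ContDiffOn ℝ (⊤ : ℕ∞) (fun y => Real.exp (-(2 * u y))) U :=
    contDiff_exp.comp_contDiffOn (contDiffOn_const.mul hu).neg
  have hψ : ContDiff ℝ (⊤ : ℕ∞) fun y => Real.exp (-(2 * u y)) * φ y := by
    simpa only [smul_eq_mul, mul_comm] using contDiff_smul_of_tsupport_subset hU hφ hweight hφU
  simpa only [mul_assoc] using setIntegral_inner_pd2_sub_norm_pd2_sq_mul hU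
    (hf.of_le (WithTop.coe_le_coe.2 le_top)) (hψ.of_le (WithTop.coe_le_coe.2 le_top)) hφc.mul_left
    (tsupport_mul_subset_right.trans hφU)

/-- Integration-by-parts identity for smooth `f`, `u` and `φ ∈ C_c^∞(U)`:
`∫_U (⟨∂²_{11} f, ∂²_{22} f⟩ − |∂²_{12} f|²) e^{−2u} φ
  = ∫_U (⟨∂_1 f, ∂²_{12} f⟩ ∂_2(e^{−2u} φ) − ⟨∂_1 f, ∂²_{22} f⟩ ∂_1(e^{−2u} φ))`. -/
theorem stmt3 {n : ℕ} (hn : 1 ≤ n) (U : Set (EuclideanSpace ℝ (Fin 2))) (hU : IsOpen U)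
    (f : EuclideanSpace ℝ (Fin 2) → EuclideanSpace ℝ (Fin n))
    (u φ : EuclideanSpace ℝ (Fin 2) → ℝ)
    (hf : ContDiffOn ℝ (⊤ : ℕ∞) f U) (hu : ContDiffOn ℝ (⊤ : ℕ∞) u U)
    (hφ : ContDiff ℝ (⊤ : ℕ∞) φ) (hφc : HasCompactSupport φ) (hφU : tsupport φ ⊆ U) :
    ∫ x in U, ((inner ℝ (pd2 f 0 0 x) (pd2 f 1 1 x) : ℝ) - ‖pd2 f 0 1 x‖ ^ 2)
        * Real.exp (-(2 * u x)) * φ x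
      = ∫ x in U,
          ((inner ℝ (pd f 0 x) (pd2 f 0 1 x) : ℝ)
              * pd (fun y => Real.exp (-(2 * u y)) * φ y) 1 x
            - (inner ℝ (pd f 0 x) (pd2 f 1 1 x) : ℝ)
              * pd (fun y => Real.exp (-(2 * u y)) * φ y) 0 x) :=
  stmt3_general U hU f u φ hf hu hφ hφc hφU
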